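/- Let x be a zero-mean σ²-sub-Gaussian random vector in ℝ^d and let τ₁ > 0 satisfy P(|x_j| ≥ τ₁) ≤ 1/n² for all j ∈ [d] (for instance τ₁ = 2σ√(log n)). Define the coordinatewise shrunken vector x̃_j = sgn(x_j) min{|x_j|, τ₁}. Then for all j, l ∈ [d], the shrinkage bias of the covariance entries satisfies |E[x̃_j x̃_l] − E[x_j x_l]| ≤ C σ² / n for an absolute constant C. -/

import Mathlib

open MeasureTheory

noncomputable section

/-- A random variable `f` is sub-Gaussian with variance proxy `v` (zero-mean form). -/
def SubGMGF {Ω : Type*} [MeasurableSpace Ω] (μ : Measure Ω) (f : Ω → ℝ) (v : ℝ) : Prop :=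
  AEMeasurable f μ ∧ ∀ t : ℝ, Integrable (fun ω => Real.exp (t * f ω)) μ ∧
    ∫ ω, Real.exp (t * f ω) ∂μ ≤ Real.exp (v * t ^ 2 / 2)

/-- A random vector `X` is sub-Gaussian with variance proxy `v`. -/
def VecSubG {Ω : Type*} [MeasurableSpace Ω] {d : ℕ} (μ : Measure Ω)
    (X : Ω → EuclideanSpace ℝ (Fin d)) (v : ℝ) : Prop :=
  ∀ u : EuclideanSpace ℝ (Fin d), ‖u‖ = 1 → SubGMGF μ (fun ω => ∑ i, u i * X ω i) v

/-- Coordinatewise shrinkage `sgn(a) min{|a|, τ}`. -/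
def shrink (τ a : ℝ) : ℝ := Real.sign a * min |a| τ

/-!
Shrinkage changes `x_j x_l` only on the event `A = {|x_j| ≥ τ₁} ∪ {|x_l| ≥ τ₁}`, and there by
at most `|x_j x_l|` per clipped coordinate. The AM–GM inequality
`|t| 1_A ≤ t² / (2c) + c 1_A / 2`, a pointwise form of Cauchy–Schwarz, with `c = σ² n` balances
the fourth moment `E[(x_j x_l)²] ≤ 144 σ⁴` (read off the moment generating function at
`t = ±1/σ`) against `P(A) ≤ 2 / n²`; both contributions are of order `σ² / n`.
-/

lemma shrink_eq_max_min {τ : ℝ} (hτ : 0 ≤ τ) (a : ℝ) : shrink τ a = max (-τ) (min a τ) := by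
  rcases lt_trichotomy a 0 with h | rfl | h
  · rw [shrink, Real.sign_of_neg h, abs_of_neg h, neg_one_mul, ← max_neg_neg, neg_neg,
      min_eq_left (h.le.trans hτ), max_comm]
  · simp [shrink, hτ]
  · rw [shrink, Real.sign_of_pos h, abs_of_pos h, one_mul,
      max_eq_right ((neg_nonpos.2 hτ).trans (le_min h.le hτ))]

lemma continuous_shrink {τ : ℝ} (hτ : 0 ≤ τ) : Continuous (shrink τ) := by
  simp_rw [funext (shrink_eq_max_min hτ)]
  fun_prop

lemma abs_shrink_le_abs {τ : ℝ} (hτ : 0 ≤ τ) (a : ℝ) : |shrink τ a| ≤ |a| := by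
  rw [shrink_eq_max_min hτ]
  grind

lemma abs_shrink_sub_le {τ : ℝ} (hτ : 0 ≤ τ) (a : ℝ) :
    |shrink τ a - a| ≤ |a| * {x : ℝ | τ ≤ |x|}.indicator 1 a := by
  rw [shrink_eq_max_min hτ]
  by_cases h : τ ≤ |a|
  · rw [Set.indicator_of_mem (show a ∈ {x : ℝ | τ ≤ |x|} from h), Pi.one_apply, mul_one]
    grind
  · rw [Set.indicator_of_notMem (show a ∉ {x : ℝ | τ ≤ |x|} from h), mul_zero]
    grind

lemma abs_shrink_mul_shrink_sub_mul_le {τ : ℝ} (hτ : 0 ≤ τ) (a b : ℝ) :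
    |shrink τ a * shrink τ b - a * b| ≤
      |a * b| * ({x : ℝ | τ ≤ |x|}.indicator 1 a + {x : ℝ | τ ≤ |x|}.indicator 1 b) :=
  calc |shrink τ a * shrink τ b - a * b|
      = |shrink τ b * (shrink τ a - a) + a * (shrink τ b - b)| := by ring_nf
    _ ≤ |shrink τ b| * |shrink τ a - a| + |a| * |shrink τ b - b| := by
      rw [← abs_mul, ← abs_mul]; exact abs_add_le _ _
    _ ≤ |b| * (|a| * {x : ℝ | τ ≤ |x|}.indicator 1 a)
        + |a| * (|b| * {x : ℝ | τ ≤ |x|}.indicator 1 b) :=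
      add_le_add
        (mul_le_mul (abs_shrink_le_abs hτ b) (abs_shrink_sub_le hτ a) (abs_nonneg _)
          (abs_nonneg _))
        (mul_le_mul_of_nonneg_left (abs_shrink_sub_le hτ b) (abs_nonneg a))
    _ = _ := by rw [abs_mul]; ring

lemma abs_shrink_mul_shrink_sub_mul_le_sq_div_add {τ c : ℝ} (hτ : 0 ≤ τ) (hc : 0 < c)
    (a b : ℝ) :
    |shrink τ a * shrink τ b - a * b| ≤
      (a * b) ^ 2 / c +
        c / 2 * ({x : ℝ | τ ≤ |x|}.indicator 1 a + {x : ℝ | τ ≤ |x|}.indicator 1 b) := by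
  set χ : ℝ := {x : ℝ | τ ≤ |x|}.indicator 1 a + {x : ℝ | τ ≤ |x|}.indicator 1 b
  have hχ : 0 ≤ χ ∧ χ ≤ 2 := by
    simp only [χ, Set.indicator_apply, Pi.one_apply]
    split_ifs <;> norm_num
  have amgm : |a * b| ≤ (a * b) ^ 2 / (2 * c) + c / 2 := by
    have := two_mul_le_add_sq |a * b| c
    rw [sq_abs] at this
    rw [div_add_div _ _ (by positivity) two_ne_zero, le_div_iff₀ (by positivity)]
    nlinarith
  calc |shrink τ a * shrink τ b - a * b| ≤ |a * b| * χ :=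
        abs_shrink_mul_shrink_sub_mul_le hτ a b
    _ ≤ ((a * b) ^ 2 / (2 * c) + c / 2) * χ := by gcongr; exact hχ.1
    _ ≤ _ := by
      have : (a * b) ^ 2 / (2 * c) * χ ≤ (a * b) ^ 2 / c :=
        calc (a * b) ^ 2 / (2 * c) * χ ≤ (a * b) ^ 2 / (2 * c) * 2 := by gcongr; exact hχ.2
          _ = (a * b) ^ 2 / c := by field_simp
      linarith

theorem abs_integral_shrink_mul_shrink_sub_le {Ω : Type*} [MeasurableSpace Ω] {μ : Measure Ω}
    [IsFiniteMeasure μ] {X Y : Ω → ℝ} {τ c : ℝ} (hτ : 0 ≤ τ) (hc : 0 < c)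
    (hX : Measurable X) (hY : Measurable Y) (hXY : MemLp (fun ω => X ω * Y ω) 2 μ) :
    |∫ ω, shrink τ (X ω) * shrink τ (Y ω) ∂μ - ∫ ω, X ω * Y ω ∂μ| ≤
      (∫ ω, (X ω * Y ω) ^ 2 ∂μ) / c +
        c / 2 * (μ.real {ω | τ ≤ |X ω|} + μ.real {ω | τ ≤ |Y ω|}) := by
  set T := {x : ℝ | τ ≤ |x|}
  have tail : ∀ Z : Ω → ℝ, Measurable Z →
      Integrable (fun ω => (T.indicator 1 (Z ω) : ℝ)) μ ∧
        ∫ ω, (T.indicator 1 (Z ω) : ℝ) ∂μ = μ.real {ω | τ ≤ |Z ω|} := by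
    intro Z hZ
    have hT : MeasurableSet (Z ⁻¹' T) := hZ (measurableSet_le measurable_const measurable_abs)
    exact ⟨(integrable_const 1).indicator hT, integral_indicator_one hT⟩
  have hprod : Integrable (fun ω => X ω * Y ω) μ := hXY.integrable one_le_two
  have hshrink : Integrable (fun ω => shrink τ (X ω) * shrink τ (Y ω)) μ := by
    have hmeas := (continuous_shrink hτ).measurable
    refine hprod.mono ((hmeas.comp hX).mul (hmeas.comp hY)).aestronglyMeasurable
      (ae_of_all _ fun ω => ?_)
    simp only [norm_mul, Real.norm_eq_abs]
    exact mul_le_mul (abs_shrink_le_abs hτ _) (abs_shrink_le_abs hτ _) (abs_nonneg _)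
      (abs_nonneg _)
  have hsq : Integrable (fun ω => (X ω * Y ω) ^ 2 / c) μ := hXY.integrable_sq.div_const c
  have htails : Integrable (fun ω => c / 2 * (T.indicator 1 (X ω) + T.indicator 1 (Y ω))) μ :=
    ((tail X hX).1.add (tail Y hY).1).const_mul _
  calc |∫ ω, shrink τ (X ω) * shrink τ (Y ω) ∂μ - ∫ ω, X ω * Y ω ∂μ|
      = |∫ ω, (shrink τ (X ω) * shrink τ (Y ω) - X ω * Y ω) ∂μ| := by
        rw [integral_sub hshrink hprod]
    _ ≤ ∫ ω, |shrink τ (X ω) * shrink τ (Y ω) - X ω * Y ω| ∂μ := abs_integral_le_integral_abs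
    _ ≤ ∫ ω, ((X ω * Y ω) ^ 2 / c + c / 2 * (T.indicator 1 (X ω) + T.indicator 1 (Y ω))) ∂μ :=
        integral_mono (hshrink.sub hprod).abs (hsq.add htails) fun ω =>
          abs_shrink_mul_shrink_sub_mul_le_sq_div_add hτ hc (X ω) (Y ω)
    _ = _ := by
        rw [integral_add hsq htails, integral_div, integral_const_mul,
          integral_add (tail X hX).1 (tail Y hY).1, (tail X hX).2, (tail Y hY).2]

lemma pow_four_le_exp_add_exp (u : ℝ) : u ^ 4 ≤ 24 * (Real.exp u + Real.exp (-u)) := by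
  have h := Real.pow_div_factorial_le_exp |u| (abs_nonneg u) 4
  rw [Even.pow_abs (by decide)] at h
  norm_num [Nat.factorial] at h
  linarith [Real.exp_abs_le u]

namespace SubGMGF

variable {Ω : Type*} [MeasurableSpace Ω] {μ : Measure Ω} {f g : Ω → ℝ} {v w σ : ℝ}

lemma integrable_pow_four (hf : SubGMGF μ f v) : Integrable (fun ω => f ω ^ 4) μ := by
  refine ((((hf.2 1).1.add (hf.2 (-1)).1).const_mul 24)).mono'
    (hf.1.pow_const 4).aestronglyMeasurable (ae_of_all _ fun ω => ?_)
  rw [Real.norm_eq_abs, abs_of_nonneg (by positivity)]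
  simp only [Pi.add_apply, one_mul, neg_one_mul]
  exact pow_four_le_exp_add_exp (f ω)

lemma integral_pow_four_le (hf : SubGMGF μ f (σ ^ 2)) (hσ : σ ≠ 0) :
    ∫ ω, f ω ^ 4 ∂μ ≤ 144 * σ ^ 4 := by
  obtain ⟨hint_pos, hmgf_pos⟩ := hf.2 σ⁻¹
  obtain ⟨hint_neg, hmgf_neg⟩ := hf.2 (-σ⁻¹)
  have hexp : Real.exp (σ ^ 2 * σ⁻¹ ^ 2 / 2) ≤ 3 := by
    rw [← mul_pow, mul_inv_cancel₀ hσ]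
    linarith [Real.exp_le_exp.2 (by norm_num : (1 : ℝ) / 2 ≤ 1), Real.exp_one_lt_d9]
  rw [neg_sq] at hmgf_neg
  have hpt : ∀ ω, f ω ^ 4 ≤
      24 * σ ^ 4 * (Real.exp (σ⁻¹ * f ω) + Real.exp (-σ⁻¹ * f ω)) := fun ω => by
    have h := pow_four_le_exp_add_exp (σ⁻¹ * f ω)
    rw [mul_pow] at h
    rw [neg_mul]
    calc f ω ^ 4 = σ ^ 4 * (σ⁻¹ ^ 4 * f ω ^ 4) := by field_simp
      _ ≤ σ ^ 4 * (24 * (Real.exp (σ⁻¹ * f ω) + Real.exp (-(σ⁻¹ * f ω)))) := by gcongr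
      _ = _ := by ring
  calc ∫ ω, f ω ^ 4 ∂μ
      ≤ ∫ ω, 24 * σ ^ 4 * (Real.exp (σ⁻¹ * f ω) + Real.exp (-σ⁻¹ * f ω)) ∂μ :=
        integral_mono hf.integrable_pow_four ((hint_pos.add hint_neg).const_mul _) hpt
    _ = 24 * σ ^ 4 * (∫ ω, Real.exp (σ⁻¹ * f ω) ∂μ + ∫ ω, Real.exp (-σ⁻¹ * f ω) ∂μ) := by
        rw [integral_const_mul, integral_add hint_pos hint_neg]
    _ ≤ 24 * σ ^ 4 * (3 + 3) := by gcongr <;> linarith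
    _ = 144 * σ ^ 4 := by ring

lemma memLp_two_mul (hf : SubGMGF μ f v) (hg : SubGMGF μ g w) :
    MemLp (fun ω => f ω * g ω) 2 μ := by
  have hmeas : AEStronglyMeasurable (fun ω => f ω * g ω) μ :=
    (hf.1.mul hg.1).aestronglyMeasurable
  refine (memLp_two_iff_integrable_sq hmeas).2 <|
    ((hf.integrable_pow_four.add hg.integrable_pow_four).div_const 2).mono'
      (hmeas.pow 2) (ae_of_all _ fun ω => ?_)
  rw [Real.norm_eq_abs, abs_of_nonneg (by positivity), Pi.add_apply]
  nlinarith [sq_nonneg (f ω ^ 2 - g ω ^ 2)]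

lemma integral_mul_sq_le (hf : SubGMGF μ f (σ ^ 2)) (hg : SubGMGF μ g (σ ^ 2)) (hσ : σ ≠ 0) :
    ∫ ω, (f ω * g ω) ^ 2 ∂μ ≤ 144 * σ ^ 4 :=
  calc ∫ ω, (f ω * g ω) ^ 2 ∂μ ≤ ∫ ω, (f ω ^ 4 + g ω ^ 4) / 2 ∂μ :=
        integral_mono (hf.memLp_two_mul hg).integrable_sq
          ((hf.integrable_pow_four.add hg.integrable_pow_four).div_const 2)
          fun ω => by nlinarith [sq_nonneg (f ω ^ 2 - g ω ^ 2)]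
    _ = ((∫ ω, f ω ^ 4 ∂μ) + ∫ ω, g ω ^ 4 ∂μ) / 2 := by
        rw [integral_div, integral_add hf.integrable_pow_four hg.integrable_pow_four]
    _ ≤ 144 * σ ^ 4 := by
        linarith [hf.integral_pow_four_le hσ, hg.integral_pow_four_le hσ]

end SubGMGF

lemma VecSubG.subGMGF_apply {Ω : Type*} [MeasurableSpace Ω] {d : ℕ} {μ : Measure Ω}
    {X : Ω → EuclideanSpace ℝ (Fin d)} {v : ℝ} (hX : VecSubG μ X v) (i : Fin d) :
    SubGMGF μ (fun ω => X ω i) v := by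
  simpa using hX (EuclideanSpace.single i 1) (by simp)

theorem stmt17 : ∃ C : ℝ, 0 < C ∧
    ∀ (d n : ℕ) (σ τ₁ : ℝ), 0 < d → 0 < n → 0 < σ → 0 < τ₁ →
    ∀ (μ : Measure (EuclideanSpace ℝ (Fin d))) [IsProbabilityMeasure μ],
      -- x is a zero-mean σ²-sub-Gaussian random vector
      VecSubG μ (fun x => x) (σ ^ 2) → (∀ i, ∫ x, x i ∂μ = 0) →
      -- tail condition ensured by e.g. τ₁ = 2σ√(log n)
      (∀ j, (μ {x | τ₁ ≤ |x j|}).toReal ≤ 1 / (n : ℝ) ^ 2) →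
      ∀ j l : Fin d,
        |∫ x, shrink τ₁ (x j) * shrink τ₁ (x l) ∂μ - ∫ x, x j * x l ∂μ|
          ≤ C * σ ^ 2 / n := by
  refine ⟨145, by norm_num, fun d n σ τ₁ _ hn hσ hτ μ _ hsub _ htail j l => ?_⟩
  have hX := hsub.subGMGF_apply j
  have hY := hsub.subGMGF_apply l
  have hcoord : ∀ i : Fin d, Measurable fun x : EuclideanSpace ℝ (Fin d) => x i := by
    fun_prop
  calc _ ≤ (∫ x, (x j * x l) ^ 2 ∂μ) / (σ ^ 2 * n)
        + σ ^ 2 * n / 2 * (μ.real {x | τ₁ ≤ |x j|} + μ.real {x | τ₁ ≤ |x l|}) :=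
        abs_integral_shrink_mul_shrink_sub_le hτ.le (by positivity) (hcoord j) (hcoord l)
          (hX.memLp_two_mul hY)
    _ ≤ 144 * σ ^ 4 / (σ ^ 2 * n) + σ ^ 2 * n / 2 * (1 / (n : ℝ) ^ 2 + 1 / (n : ℝ) ^ 2) := by
        gcongr
        · exact hX.integral_mul_sq_le hY hσ.ne'
        · exact htail j
        · exact htail l
    _ = 145 * σ ^ 2 / n := by field_simp; ring
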